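/- arXiv:1912.08043 — 5 statements merged into one kernel-verified Lean document; each statement's English description precedes it below -/
import Mathlib

section
/- Let K be a finite extension of Q_p with p odd, π a uniformiser, e the ramification index, and m ≥ 1. Let α_i, α_j, β_i, β_j be distinct positive integers with β_i, β_j < α_i and β_i, β_j < α_j. Set r_i = π^{emα_i}, r_j = π^{emα_j}, c_i = 2π^{emβ_i}, c_j = 2π^{emβ_j}. Then ((c_i − c_j − r_i − r_j)/(2 − c_i − c_j + r_i − r_j))^2 is an m-th power in O_K. -/
/-!
Put `q = π ^ (e * m)`, so `‖q‖ = ‖p‖ ^ m`. As `p` is odd, `2 v_p(m) < m`, i.e. `‖q‖ < ‖m‖ ^ 2`, and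
then every `a` with `‖a - 1‖ ≤ ‖q‖` is the `m`-th power of a unit: the simplified Newton map
`z ↦ z + (a - (1 + z) ^ m) / m` is a contraction near `0`. If `βi < βj`, the numerator is
`2 π ^ (e m βi) + O(π ^ (e m (βi + 1)))` and the denominator is `2 + O(q)`, so their quotient is
`(π ^ (e βi)) ^ m` times the `m`-th power of a unit. If `βj < βi`, the same holds for minus the
numerator, and squaring removes the sign.
-/

open IsUltrametricDist Set Metric

/-- In an ultrametric space a map contracting a closed ball around `0` maps it into itself as
soon as it moves `0` by at most the radius. -/
theorem exists_isFixedPt_of_norm_sub_le_mul {E : Type*} [NormedAddCommGroup E]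
    [IsUltrametricDist E] [CompleteSpace E] {f : E → E} {r L : ℝ} (hr : 0 ≤ r) (hL : L < 1)
    (hf : ∀ z ∈ closedBall (0 : E) r, ∀ z' ∈ closedBall (0 : E) r, ‖f z - f z'‖ ≤ L * ‖z - z'‖)
    (hf0 : ‖f 0‖ ≤ r) : ∃ z ∈ closedBall (0 : E) r, Function.IsFixedPt f z := by
  have hmaps : MapsTo f (closedBall 0 r) (closedBall 0 r) := by
    intro z hz
    have hfz := hf z hz 0 (mem_closedBall_self hr)
    rw [mem_closedBall_zero_iff, sub_zero] at *
    calc ‖f z‖ = ‖(f z - f 0) + f 0‖ := by rw [sub_add_cancel]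
      _ ≤ r := (norm_add_le_max _ _).trans (max_le ?_ hf0)
    exact hfz.trans (mul_le_of_le_one_left (norm_nonneg _) hL.le |>.trans hz)
  have hcontr : ContractingWith (Real.toNNReal L) (hmaps.restrict f _ _) :=
    ⟨by simpa using hL, (LipschitzOnWith.of_dist_le_mul fun z hz z' hz' ↦ by
        rw [dist_eq_norm, dist_eq_norm]
        exact (hf z hz z' hz').trans (by gcongr; exact Real.le_coe_toNNReal L)).mapsToRestrict
      hmaps⟩
  obtain ⟨z, hz, hfix, -⟩ := hcontr.exists_fixedPoint' isClosed_closedBall.isComplete hmaps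
    (mem_closedBall_self hr) (edist_ne_top _ _)
  exact ⟨z, hz, hfix⟩

section NormedField

variable {K : Type*} [NormedField K]

lemma norm_pow_mul_le_of_lt {x : K} (hx : ‖x‖ ≤ 1) {k β γ : ℕ} (h : β < γ) :
    ‖x ^ (k * γ)‖ ≤ ‖x‖ ^ k * ‖x ^ (k * β)‖ := by
  rw [norm_pow, norm_pow, ← pow_add]
  exact pow_le_pow_of_le_one (norm_nonneg x) hx (by nlinarith)

variable [IsUltrametricDist K]

lemma norm_le_one_of_norm_sub_one_le_one {u : K} (hu : ‖u - 1‖ ≤ 1) : ‖u‖ ≤ 1 := by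
  simpa using (norm_add_one_le_max_norm_one (u - 1)).trans (max_le hu le_rfl)

lemma norm_eq_one_of_norm_sub_one_lt_one {u : K} (hu : ‖u - 1‖ < 1) : ‖u‖ = 1 := by
  simpa [hu.le] using norm_add_eq_max_of_norm_ne_norm (x := u - 1) (y := 1) (by simpa using hu.ne)

lemma norm_mul_sub_one_le {u v : K} {c : ℝ} (hu : ‖u - 1‖ ≤ c) (hv : ‖v - 1‖ ≤ c) (hc : c ≤ 1) :
    ‖u * v - 1‖ ≤ c := by
  rw [show u * v - 1 = u * (v - 1) + (u - 1) by ring]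
  refine (norm_add_le_max _ _).trans (max_le ?_ hu)
  rw [norm_mul]
  exact (mul_le_of_le_one_left (norm_nonneg _)
    (norm_le_one_of_norm_sub_one_le_one (hu.trans hc))).trans hv

lemma norm_pow_sub_one_le {u : K} {c : ℝ} (hu : ‖u - 1‖ ≤ c) (hc : c ≤ 1) (n : ℕ) :
    ‖u ^ n - 1‖ ≤ c := by
  induction n with
  | zero => simpa using (norm_nonneg _).trans hu
  | succ n ih => exact pow_succ u n ▸ norm_mul_sub_one_le ih hu hc

/-- Factor `(1 + z) ^ m - (1 + z') ^ m` as a geometric sum times `z - z'`: each of its `m` terms is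
`1` up to `max ‖z‖ ‖z'‖`, and the `m` ones cancel `m * (z - z')`. -/
lemma norm_one_add_pow_sub_sub_le (m : ℕ) {z z' : K} (hz : ‖z‖ ≤ 1) (hz' : ‖z'‖ ≤ 1) :
    ‖((1 + z) ^ m - m * z) - ((1 + z') ^ m - m * z')‖ ≤ max ‖z‖ ‖z'‖ * ‖z - z'‖ := by
  have hgeom := geom_sum₂_mul (1 + z) (1 + z') m
  rw [add_sub_add_left_eq_sub] at hgeom
  have key : ((1 + z) ^ m - m * z) - ((1 + z') ^ m - m * z')
      = (∑ i ∈ Finset.range m, ((1 + z) ^ i * (1 + z') ^ (m - 1 - i) - 1)) * (z - z') := by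
    rw [Finset.sum_sub_distrib, Finset.sum_const, Finset.card_range, nsmul_eq_mul, mul_one,
      sub_mul, hgeom]
    ring
  rw [key, norm_mul]
  gcongr
  refine norm_sum_le_of_forall_le_of_nonneg (le_max_of_le_left (norm_nonneg z)) fun i _ ↦ ?_
  have hδ : max ‖z‖ ‖z'‖ ≤ 1 := max_le hz hz'
  refine norm_mul_sub_one_le (norm_pow_sub_one_le ?_ hδ i) (norm_pow_sub_one_le ?_ hδ _) hδ <;>
    simp

theorem norm_le_of_mem_closure_pow {π : K} (hπ : ‖π‖ ≤ 1) {k β : ℕ} {x : K}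
    (hx : x ∈ AddSubgroup.closure ((fun γ ↦ π ^ (k * γ)) '' Ioi β)) :
    ‖x‖ ≤ ‖π‖ ^ k * ‖π ^ (k * β)‖ := by
  induction hx using AddSubgroup.closure_induction with
  | mem _ hx =>
    obtain ⟨γ, hγ, rfl⟩ := hx
    exact norm_pow_mul_le_of_lt hπ hγ
  | zero => simp only [norm_zero]; positivity
  | add _ _ _ _ hx hy => exact (norm_add_le_max _ _).trans (max_le hx hy)
  | neg _ _ hx => rwa [norm_neg]

variable [CompleteSpace K]

/-- Hensel's lemma for `X ^ m - a`: the simplified Newton map `z ↦ z + (a - (1 + z) ^ m) / m`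
contracts the ball of radius `‖a - 1‖ / ‖m‖` with ratio `‖a - 1‖ / ‖m‖ ^ 2`. -/
theorem exists_pow_eq_of_norm_sub_one_lt {m : ℕ} {a : K} (ha : ‖a - 1‖ < ‖(m : K)‖ ^ 2) :
    ∃ y : K, ‖y‖ = 1 ∧ y ^ m = a := by
  have hm : 0 < ‖(m : K)‖ := by
    by_contra! h
    nlinarith [norm_nonneg (m : K), norm_nonneg (a - 1)]
  have hm0 : (m : K) ≠ 0 := norm_pos_iff.mp hm
  set r := ‖a - 1‖ / ‖(m : K)‖
  have hr : r < 1 := by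
    rw [div_lt_one hm]
    nlinarith [norm_natCast_le_one K m]
  let g : K → K := fun z ↦ z + (a - (1 + z) ^ m) / m
  have hlip : ∀ z ∈ closedBall (0 : K) r, ∀ z' ∈ closedBall (0 : K) r,
      ‖g z - g z'‖ ≤ (‖a - 1‖ / ‖(m : K)‖ ^ 2) * ‖z - z'‖ := by
    intro z hz z' hz'
    rw [mem_closedBall_zero_iff] at hz hz'
    have hgg : g z - g z' = -(((1 + z) ^ m - m * z) - ((1 + z') ^ m - m * z')) / m := by
      simp only [g]
      field_simp
      ring
    rw [hgg, norm_div, norm_neg, div_le_iff₀ hm]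
    calc _ ≤ max ‖z‖ ‖z'‖ * ‖z - z'‖ :=
          norm_one_add_pow_sub_sub_le m (hz.trans hr.le) (hz'.trans hr.le)
      _ ≤ r * ‖z - z'‖ := by gcongr; exact max_le hz hz'
      _ = _ := by simp only [r]; field_simp
  obtain ⟨z, hz, hfix⟩ := exists_isFixedPt_of_norm_sub_le_mul (by positivity)
    ((div_lt_one (by positivity)).2 ha) hlip (by simp [g, r])
  refine ⟨1 + z, ?_, ?_⟩
  · rw [add_comm]
    exact norm_eq_one_of_norm_sub_one_lt_one
      (by simpa using (mem_closedBall_zero_iff.1 hz).trans_lt hr)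
  · have : (a - (1 + z) ^ m) / m = 0 := by simpa [g] using hfix.eq
    rw [div_eq_zero_iff, sub_eq_zero] at this
    exact (this.resolve_right hm0).symm

theorem exists_eq_mul_pow_of_norm_sub_le {m : ℕ} {t : ℝ} (ht : t < ‖(m : K)‖ ^ 2) {a b : K}
    (hb : b ≠ 0) (hab : ‖a - b‖ ≤ t * ‖b‖) : ∃ y : K, ‖y‖ = 1 ∧ a = b * y ^ m := by
  have hab' : ‖a / b - 1‖ < ‖(m : K)‖ ^ 2 := by
    rw [div_sub_one hb, norm_div, div_lt_iff₀ (norm_pos_iff.2 hb)]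
    exact hab.trans_lt (mul_lt_mul_of_pos_right ht (norm_pos_iff.2 hb))
  obtain ⟨y, hy, hym⟩ := exists_pow_eq_of_norm_sub_one_lt hab'
  exact ⟨y, hy, by rw [hym, mul_div_cancel₀ _ hb]⟩

theorem exists_pow_eq_div_of_mem_closure {π : K} (hπ : ‖π‖ ≤ 1) (hπ0 : π ≠ 0) {k m β : ℕ}
    (hm : ‖π‖ ^ (k * m) < ‖(m : K)‖ ^ 2) {c E E' : K} (hc : ‖c‖ = 1)
    (hE : E ∈ AddSubgroup.closure ((fun γ ↦ π ^ (k * m * γ)) '' Ioi β))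
    (hE' : E' ∈ AddSubgroup.closure ((fun γ ↦ π ^ (k * m * γ)) '' Ioi 0)) :
    ∃ x : K, ‖x‖ ≤ 1 ∧ x ^ m = (c * π ^ (k * m * β) + E) / (c + E') := by
  have hc0 : c ≠ 0 := norm_ne_zero_iff.1 (hc ▸ one_ne_zero)
  obtain ⟨y, hy, hNy⟩ := exists_eq_mul_pow_of_norm_sub_le hm (a := c * π ^ (k * m * β) + E)
    (b := c * π ^ (k * m * β)) (mul_ne_zero hc0 (pow_ne_zero _ hπ0))
    (by simpa [hc] using norm_le_of_mem_closure_pow hπ hE)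
  obtain ⟨w, hw, hDw⟩ := exists_eq_mul_pow_of_norm_sub_le hm (a := c + E') hc0
    (by simpa [hc] using norm_le_of_mem_closure_pow hπ hE')
  have hw0 : w ≠ 0 := norm_ne_zero_iff.1 (hw ▸ one_ne_zero)
  refine ⟨π ^ (k * β) * y / w, ?_, ?_⟩
  · rw [norm_div, norm_mul, hy, hw, mul_one, div_one, norm_pow]
    exact pow_le_one₀ (norm_nonneg π) hπ
  · rw [hNy, hDw, mul_assoc, mul_div_mul_left _ _ hc0, div_pow, mul_pow, ← pow_mul,
      mul_right_comm]

end NormedField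

theorem two_mul_padicValNat_lt {p m : ℕ} [Fact p.Prime] (hp : p ≠ 2) (hm : m ≠ 0) :
    2 * padicValNat p m < m := by
  have h3p : 3 ≤ p := by have := (Fact.out : p.Prime).two_le; omega
  calc 2 * padicValNat p m < 3 ^ padicValNat p m := by
        have := one_add_mul_le_pow_of_sq_nonneg (Nat.zero_le (2 ^ 2))
          (Nat.zero_le ((1 + 2) ^ 2)) (Nat.zero_le (2 + 2)) (padicValNat p m)
        norm_num at this
        omega
    _ ≤ p ^ padicValNat p m := Nat.pow_le_pow_left h3p _
    _ ≤ m := Nat.le_of_dvd (Nat.pos_of_ne_zero hm) pow_padicValNat_dvd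

theorem Padic.norm_p_pow_lt_norm_natCast_sq {p m : ℕ} [Fact p.Prime] (hp : p ≠ 2) (hm : m ≠ 0) :
    ‖(p : ℚ_[p])‖ ^ m < ‖(m : ℚ_[p])‖ ^ 2 := by
  have hp1 : (1 : ℝ) < p := by exact_mod_cast (Fact.out : p.Prime).one_lt
  rw [Padic.norm_p, Padic.norm_eq_zpow_neg_valuation (by exact_mod_cast hm),
    Padic.valuation_natCast, inv_pow, ← zpow_natCast, ← zpow_neg, ← zpow_natCast, ← zpow_mul]
  refine zpow_lt_zpow_right₀ hp1 ?_
  have : ((2 * padicValNat p m : ℕ) : ℤ) < m := by exact_mod_cast two_mul_padicValNat_lt hp hm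
  push_cast at this ⊢
  linarith

theorem Padic.norm_two_eq_one {p : ℕ} [Fact p.Prime] (hp : p ≠ 2) : ‖(2 : ℚ_[p])‖ = 1 := by
  rw [← Nat.cast_ofNat, Padic.norm_natCast_eq_one_iff]
  exact (Nat.coprime_primes Fact.out Nat.prime_two).2 hp

theorem cross_term_is_mth_power_general
    (p : ℕ) [Fact p.Prime] (hp2 : p ≠ 2)
    (K : Type*) [NormedField K] [IsUltrametricDist K] [CompleteSpace K]
    [Algebra ℚ_[p] K]
    (hext : ∀ x : ℚ_[p], ‖algebraMap ℚ_[p] K x‖ = ‖x‖)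
    (π : K) (hπ0 : 0 < ‖π‖) (hπ1 : ‖π‖ < 1)
    (e : ℕ) (he : ‖π‖ ^ e = ‖algebraMap ℚ_[p] K (p : ℚ_[p])‖)
    (m : ℕ) (hm : 1 ≤ m)
    (αi αj βi βj : ℕ) (hαi : 0 < αi) (hαj : 0 < αj) (hβi : 0 < βi) (hβj : 0 < βj)
    (hdist : αi ≠ αj ∧ αi ≠ βi ∧ αi ≠ βj ∧ αj ≠ βi ∧ αj ≠ βj ∧ βi ≠ βj)
    (hlt : βi < αi ∧ βi < αj ∧ βj < αi ∧ βj < αj)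
    (ri rj ci cj : K)
    (hri : ri = π ^ (e * m * αi)) (hrj : rj = π ^ (e * m * αj))
    (hci : ci = 2 * π ^ (e * m * βi)) (hcj : cj = 2 * π ^ (e * m * βj)) :
    ∃ x : K, ‖x‖ ≤ 1 ∧ x ^ m = ((ci - cj - ri - rj) / (2 - ci - cj + ri - rj)) ^ 2 := by
  have h2 : ‖(2 : K)‖ = 1 := by
    rw [← map_ofNat (algebraMap ℚ_[p] K) 2, hext, Padic.norm_two_eq_one hp2]
  have hm2 : ‖π‖ ^ (e * m) < ‖(m : K)‖ ^ 2 := by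
    rw [pow_mul, he, ← map_natCast (algebraMap ℚ_[p] K) m, hext, hext]
    exact Padic.norm_p_pow_lt_norm_natCast_sq hp2 (by omega)
  have hsq : ∀ {a b : K}, a ^ 2 = b → (∃ x : K, ‖x‖ ≤ 1 ∧ x ^ m = a) →
      ∃ x : K, ‖x‖ ≤ 1 ∧ x ^ m = b := by
    rintro a b rfl ⟨x, hx, rfl⟩
    exact ⟨x ^ 2, by rw [norm_pow]; exact pow_le_one₀ (norm_nonneg x) hx, by ring⟩
  obtain ⟨hii, hij, hji, hjj⟩ := hlt
  subst hri hrj hci hcj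
  have hmem : ∀ {β γ : ℕ}, β < γ →
      π ^ (e * m * γ) ∈ AddSubgroup.closure ((fun γ ↦ π ^ (e * m * γ)) '' Ioi β) :=
    fun h ↦ AddSubgroup.subset_closure (mem_image_of_mem _ h)
  -- `2 * x` is written `x + x` so that every summand is one of the generators
  have hD : -(π ^ (e * m * βi) + π ^ (e * m * βi)) - (π ^ (e * m * βj) + π ^ (e * m * βj)) +
      π ^ (e * m * αi) - π ^ (e * m * αj) ∈
      AddSubgroup.closure ((fun γ ↦ π ^ (e * m * γ)) '' Ioi 0) := by
    apply_rules [add_mem, sub_mem, neg_mem, hmem]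
  rcases lt_or_gt_of_ne hdist.2.2.2.2.2 with h | h
  · exact hsq (by ring) (exists_pow_eq_div_of_mem_closure hπ1.le (norm_pos_iff.1 hπ0) hm2 h2
      (β := βi) (E := -(π ^ (e * m * βj) + π ^ (e * m * βj)) - π ^ (e * m * αi) -
        π ^ (e * m * αj)) (by apply_rules [add_mem, sub_mem, neg_mem, hmem]) hD)
  · exact hsq (by ring) (exists_pow_eq_div_of_mem_closure hπ1.le (norm_pos_iff.1 hπ0) hm2 h2
      (β := βj) (E := -(π ^ (e * m * βi) + π ^ (e * m * βi)) + π ^ (e * m * αi) +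
        π ^ (e * m * αj)) (by apply_rules [add_mem, sub_mem, neg_mem, hmem]) hD)

/-- Let `K` be a finite extension of `ℚ_p` (`p` odd), `π` a uniformiser, `e` the ramification
index, `m ≥ 1`.  For distinct positive integers `αi, αj, βi, βj` with `βi, βj < αi, αj`, setting
`ri = π^{emαi}`, `rj = π^{emαj}`, `ci = 2π^{emβi}`, `cj = 2π^{emβj}`, the element
`((ci - cj - ri - rj)/(2 - ci - cj + ri - rj))^2` is an `m`-th power in `𝒪_K`. -/
theorem cross_term_is_mth_power
    (p : ℕ) [Fact p.Prime] (hp2 : p ≠ 2)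
    (K : Type*) [NormedField K] [IsUltrametricDist K] [CompleteSpace K]
    [Algebra ℚ_[p] K] [FiniteDimensional ℚ_[p] K]
    (hext : ∀ x : ℚ_[p], ‖algebraMap ℚ_[p] K x‖ = ‖x‖)
    (π : K) (hπ0 : 0 < ‖π‖) (hπ1 : ‖π‖ < 1)
    (hπmax : ∀ x : K, ‖x‖ < 1 → ‖x‖ ≤ ‖π‖)
    (e : ℕ) (he1 : 1 ≤ e) (he : ‖π‖ ^ e = ‖algebraMap ℚ_[p] K (p : ℚ_[p])‖)
    (m : ℕ) (hm : 1 ≤ m)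
    (αi αj βi βj : ℕ) (hαi : 0 < αi) (hαj : 0 < αj) (hβi : 0 < βi) (hβj : 0 < βj)
    (hdist : αi ≠ αj ∧ αi ≠ βi ∧ αi ≠ βj ∧ αj ≠ βi ∧ αj ≠ βj ∧ βi ≠ βj)
    (hlt : βi < αi ∧ βi < αj ∧ βj < αi ∧ βj < αj)
    (ri rj ci cj : K)
    (hri : ri = π ^ (e * m * αi)) (hrj : rj = π ^ (e * m * αj))
    (hci : ci = 2 * π ^ (e * m * βi)) (hcj : cj = 2 * π ^ (e * m * βj)) :
    ∃ x : K, ‖x‖ ≤ 1 ∧ x ^ m = ((ci - cj - ri - rj) / (2 - ci - cj + ri - rj)) ^ 2 :=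
  cross_term_is_mth_power_general p hp2 K hext π hπ0 hπ1 e he m hm αi αj βi βj hαi hαj hβi hβj hdist
    hlt ri rj ci cj hri hrj hci hcj
end

section
/- Let K be a field of characteristic 0, let c_i, c_j, r_i, r_j ∈ K with r_i, r_j ≠ 0, define γ_k (k = i, j) by the matrix ((c_k, c_k² − r_k² − 2c_k),(1, c_k − 2)), and set a = 2 − c_i + r_i, z = 2 − c_j − r_j. Then (assuming all denominators are nonzero) the cross-ratio expression ((z − a)(γ_j z − γ_i a)) / ((z − γ_i a)(γ_j z − a)) equals ((c_i − c_j − r_i − r_j)/(2 − c_i − c_j + r_i − r_j))². -/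
/-- The Möbius transformation with matrix `((c, c² - r² - 2c), (1, c - 2))`. -/
def moebius {K : Type*} [Field K] (c r w : K) : K :=
  (c * w + (c ^ 2 - r ^ 2 - 2 * c)) / (w + (c - 2))

/-- Lemma 4.7(2): over a field of characteristic zero, with `γ_k` given by the matrix
`((c_k, c_k² - r_k² - 2c_k), (1, c_k - 2))`, `a = 2 - c_i + r_i`, `z = 2 - c_j - r_j`, and all
denominators nonzero, the cross-ratio `((z - a)(γ_j z - γ_i a))/((z - γ_i a)(γ_j z - a))`
equals `((c_i - c_j - r_i - r_j)/(2 - c_i - c_j + r_i - r_j))²`. -/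
theorem cross_ratio_formula
    (K : Type*) [Field K] [CharZero K]
    (ci ri cj rj : K) (hri : ri ≠ 0) (hrj : rj ≠ 0)
    (a z : K) (ha : a = 2 - ci + ri) (hz : z = 2 - cj - rj)
    (h1 : z - moebius ci ri a ≠ 0) (h2 : moebius cj rj z - a ≠ 0) :
    ((z - a) * (moebius cj rj z - moebius ci ri a)) /
        ((z - moebius ci ri a) * (moebius cj rj z - a))
      = ((ci - cj - ri - rj) / (2 - ci - cj + ri - rj)) ^ 2 := by
  subst ha hz
  have hγi : moebius ci ri (2 - ci + ri) = ci - ri := by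
    rw [moebius, show 2 - ci + ri + (ci - 2) = ri by ring, div_eq_iff hri]; ring
  have hγj : moebius cj rj (2 - cj - rj) = cj + rj := by
    rw [moebius, show 2 - cj - rj + (cj - 2) = -rj by ring,
      div_eq_iff (neg_ne_zero.mpr hrj)]; ring
  rw [hγi] at h1 ⊢
  rw [hγj] at h2 ⊢
  have hd : 2 - ci - cj + ri - rj ≠ 0 := fun h => h1 (by linear_combination h)
  rw [div_pow, div_eq_div_iff (mul_ne_zero h1 h2) (pow_ne_zero 2 hd)]
  ring
end

section
/- Let K be a field of characteristic 0, c, r ∈ K with r ≠ 0, and let γ be the Möbius transformation with matrix ((c, c² − r² − 2c),(1, c − 2)). Set a = 2 − c + r and z = 2 − c − r. Then (assuming all expressions are defined) ((z − a)(γz − γa)) / ((z − γa)(γz − a)) = (r/(c − 1))². -/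
/-- Lemma 4.7(3) (the diagonal case `i = j` of Lemma 4.7(2)): over a field of characteristic
zero, with `γ` given by the matrix `((c, c² - r² - 2c), (1, c - 2))`, `a = 2 - c + r`,
`z = 2 - c - r`, the product `((z - a)(γz - γa))/((z - γa)(γz - a))` equals `(r/(c - 1))²`. -/
theorem cross_ratio_diagonal
    (K : Type*) [Field K] [CharZero K]
    (c r : K) (hr : r ≠ 0) (hc : c ≠ 1)
    (a z : K) (ha : a = 2 - c + r) (hz : z = 2 - c - r) :
    ((z - a) * (moebius c r z - moebius c r a)) /
        ((z - moebius c r a) * (moebius c r z - a))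
      = (r / (c - 1)) ^ 2 := by
  have hma : moebius c r a = c - r := by
    rw [moebius, ha]
    rw [show 2 - c + r + (c - 2) = r by ring]
    field_simp
    ring
  have hmz : moebius c r z = c + r := by
    rw [moebius, hz]
    rw [show 2 - c - r + (c - 2) = -r by ring]
    rw [div_eq_iff (neg_ne_zero.mpr hr)]
    ring
  have hc1 : c - 1 ≠ 0 := sub_ne_zero.mpr hc
  rw [hma, hmz, ha, hz]
  rw [show (2 - c - r - (2 - c + r)) * (c + r - (c - r)) = -(2*r)^2 by ring,
      show (2 - c - r - (c - r)) * (c + r - (2 - c + r)) = -(2*(c-1))^2 by ring,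
      neg_div_neg_eq, div_pow]
  rw [mul_pow, mul_pow, mul_div_mul_left _ _ (by norm_num : (2:K)^2 ≠ 0)]
end

section
/- Let K be a field of characteristic 0, let c_i, c_j, r_i, r_j ∈ K with r_i, r_j ≠ 0, let γ_j have matrix ((c_j, c_j² − r_j² − 2c_j),(1, c_j − 2)), a = 2 − c_i + r_i, z = 2 − c_j − r_j, and let γ_i a = c_i − r_i. Then (assuming all denominators are nonzero): ((z − γ_j^{-1}a)(γ_j z − γ_j a)) / ((z − γ_j^{-1} γ_i a)(γ_j z − γ_j γ_i a)) = 1. -/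
/-- The inverse Möbius transformation `γ⁻¹`, with (adjugate) matrix
`((c - 2, -(c² - r² - 2c)), (-1, c))`. -/
def moebiusInv {K : Type*} [Field K] (c r w : K) : K :=
  ((c - 2) * w - (c ^ 2 - r ^ 2 - 2 * c)) / (-w + c)

/-- Lemma 4.7(4): with `γ_j` given by the matrix `((c_j, c_j² - r_j² - 2c_j), (1, c_j - 2))`,
`a = 2 - c_i + r_i`, `z = 2 - c_j - r_j`, `γ_i a = c_i - r_i`, and all denominators nonzero,
`((z - γ_j⁻¹a)(γ_j z - γ_j a)) / ((z - γ_j⁻¹γ_i a)(γ_j z - γ_j γ_i a)) = 1`. -/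
theorem cross_ratio_alpha_eq_one
    (K : Type*) [Field K] [CharZero K]
    (ci ri cj rj : K) (hrj : rj ≠ 0)
    (a z gia : K) (ha : a = 2 - ci + ri) (hz : z = 2 - cj - rj) (hgia : gia = ci - ri)
    (h1 : 2 - ci - cj + ri ≠ 0) (h2 : ci - cj - ri ≠ 0)
    (h3 : z - moebiusInv cj rj gia ≠ 0) (h4 : moebius cj rj z - moebius cj rj gia ≠ 0) :
    ((z - moebiusInv cj rj a) * (moebius cj rj z - moebius cj rj a)) /
        ((z - moebiusInv cj rj gia) * (moebius cj rj z - moebius cj rj gia)) = 1 := by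
  have d1 : -a + cj ≠ 0 := by
    intro h; apply h1; rw [ha] at h; linear_combination -h
  have d2 : -gia + cj ≠ 0 := by
    intro h; apply h2; rw [hgia] at h; linear_combination -h
  have d3 : a + (cj - 2) ≠ 0 := by
    intro h; apply h2; rw [ha] at h; linear_combination -h
  have d4 : gia + (cj - 2) ≠ 0 := by
    intro h; apply h1; rw [hgia] at h; linear_combination -h
  have d5 : z + (cj - 2) ≠ 0 := by
    rw [hz]; intro h; apply hrj; linear_combination -h
  rw [div_eq_one_iff_eq (mul_ne_zero h3 h4)]
  simp only [moebius, moebiusInv] at *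
  field_simp at *
  subst ha hz hgia
  ring
end

section
/- Let K be a finite extension of Q_p with p odd, π a uniformiser, e the ramification index, m ≥ 1, q_K the residue field size. With α_1 > … > α_g > β_2 > … > β_g positive integers, r_1 = c_1 = π^{emα_1}, r_i = π^{emα_i}, c_i = 2π^{emβ_i} for 2 ≤ i ≤ g: for all distinct 1 ≤ i, j ≤ g, |r_i|/|c_i − c_j| ≤ q_K^{−em} < 1. -/
/-- Theorem 5.4(iii): with `K/ℚ_p` (`p` odd) a finite extension with nonarchimedean absolute
value extending that of `ℚ_p` (normalised so `‖π‖ = q_K⁻¹`), `π` a uniformiser, `e` the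
ramification index, `m ≥ 1`, positive integers `α 1 > … > α g > β 2 > … > β g`, and
`r 1 = c 1 = π^{em·α 1}`, `r i = π^{em·α i}`, `c i = 2π^{em·β i}` for `2 ≤ i ≤ g`:
for all distinct `1 ≤ i, j ≤ g`, `‖r i‖/‖c i - c j‖ ≤ q_K^{-em} < 1`. -/
theorem disc_ratio_bound
    (p : ℕ) [Fact p.Prime] (hp2 : p ≠ 2)
    (K : Type*) [NormedField K] [IsUltrametricDist K]
    [Algebra ℚ_[p] K] [FiniteDimensional ℚ_[p] K]
    (hext : ∀ x : ℚ_[p], ‖algebraMap ℚ_[p] K x‖ = ‖x‖)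
    (π : K) (hπ0 : 0 < ‖π‖) (hπ1 : ‖π‖ < 1)
    (e m g : ℕ) (he1 : 1 ≤ e) (hm : 1 ≤ m) (hg : 1 ≤ g)
    (α β : ℕ → ℕ)
    (hαpos : ∀ i, 1 ≤ i → i ≤ g → 0 < α i)
    (hβpos : ∀ i, 2 ≤ i → i ≤ g → 0 < β i)
    (hαanti : ∀ i, 1 ≤ i → i < g → α (i + 1) < α i)
    (hβanti : ∀ i, 2 ≤ i → i < g → β (i + 1) < β i)
    (hαβ : 2 ≤ g → β 2 < α g)
    (r c : ℕ → K)
    (hr1 : r 1 = π ^ (e * m * α 1)) (hc1 : c 1 = r 1)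
    (hr : ∀ i, 2 ≤ i → i ≤ g → r i = π ^ (e * m * α i))
    (hc : ∀ i, 2 ≤ i → i ≤ g → c i = 2 * π ^ (e * m * β i)) :
    (∀ i j, 1 ≤ i → i ≤ g → 1 ≤ j → j ≤ g → i ≠ j →
        ‖r i‖ / ‖c i - c j‖ ≤ ‖π‖ ^ (e * m)) ∧ ‖π‖ ^ (e * m) < 1 := by
  have hem : 0 < e * m := Nat.mul_pos he1 hm
  have hπ01 : (0:ℝ) ≤ ‖π‖ := le_of_lt hπ0
  -- ‖(2 : K)‖ = 1 since p is odd
  have h2K : ‖(2 : K)‖ = 1 := by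
    have h2 : ((2 : ℚ_[p]) : ℚ_[p]) = ((2 : ℤ) : ℚ_[p]) := by norm_num
    have hle : ‖(2 : ℚ_[p])‖ ≤ 1 := by
      rw [show (2 : ℚ_[p]) = ((2 : ℤ) : ℚ_[p]) by norm_num]
      exact Padic.norm_int_le_one 2
    have hnlt : ¬ ‖(2 : ℚ_[p])‖ < 1 := by
      rw [show (2 : ℚ_[p]) = ((2 : ℤ) : ℚ_[p]) by norm_num,
        Padic.norm_intCast_lt_one_iff]
      intro hdvd
      have hpd : p ∣ 2 := Int.natCast_dvd_natCast.mp (by exact_mod_cast hdvd)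
      exact hp2 ((Nat.prime_dvd_prime_iff_eq Fact.out Nat.prime_two).mp hpd)
    have h2Q : ‖(2 : ℚ_[p])‖ = 1 := le_antisymm hle (not_lt.mp hnlt)
    have : algebraMap ℚ_[p] K (2 : ℚ_[p]) = (2 : K) := map_ofNat _ 2
    rw [← this, hext, h2Q]
  -- monotonicity of α on [1, g]
  have hαmono : ∀ i j, 1 ≤ i → i ≤ j → j ≤ g → α j ≤ α i := by
    intro i j h1 hij hjg
    induction j with
    | zero => omega
    | succ n ih =>
      rcases Nat.eq_or_lt_of_le hij with h | h
      · exact h ▸ le_rfl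
      · exact le_trans (le_of_lt (hαanti n (by omega) (by omega)))
          (ih (by omega) (by omega))
  have hβmono : ∀ i j, 2 ≤ i → i ≤ j → j ≤ g → β j ≤ β i := by
    intro i j h1 hij hjg
    induction j with
    | zero => omega
    | succ n ih =>
      rcases Nat.eq_or_lt_of_le hij with h | h
      · exact h ▸ le_rfl
      · exact le_trans (le_of_lt (hβanti n (by omega) (by omega)))
          (ih (by omega) (by omega))
  have hβstrict : ∀ i j, 2 ≤ i → i < j → j ≤ g → β j < β i := by
    intro i j h2 hij hjg
    exact lt_of_le_of_lt (hβmono (i+1) j (by omega) (by omega) hjg)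
      (hβanti i h2 (by omega))
  -- β j < α i for all i ∈ [1,g], j ∈ [2,g]
  have hβltα : ∀ i j, 1 ≤ i → i ≤ g → 2 ≤ j → j ≤ g → β j < α i := by
    intro i j h1 hig h2 hjg
    calc β j ≤ β 2 := hβmono 2 j le_rfl h2 hjg
    _ < α g := hαβ (le_trans h2 hjg)
    _ ≤ α i := hαmono i g h1 hig le_rfl
  -- exponent function for c
  set E : ℕ → ℕ := fun k => if k = 1 then α 1 else β k with hE
  have hnormc : ∀ k, 1 ≤ k → k ≤ g → ‖c k‖ = ‖π‖ ^ (e * m * E k) := by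
    intro k h1 hkg
    rcases Nat.eq_or_lt_of_le h1 with h | h
    · rw [← h, hc1, hr1, norm_pow]; simp [hE]
    · rw [hc k (by omega) hkg, norm_mul, h2K, one_mul, norm_pow]
      simp only [hE, if_neg (by omega : k ≠ 1)]
  have hnormr : ∀ k, 1 ≤ k → k ≤ g → ‖r k‖ = ‖π‖ ^ (e * m * α k) := by
    intro k h1 hkg
    rcases Nat.eq_or_lt_of_le h1 with h | h
    · rw [← h, hr1, norm_pow]
    · rw [hr k (by omega) hkg, norm_pow]
  -- E i ≠ E j and min E < α i for distinct i j in range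
  refine ⟨fun i j h1i hig h1j hjg hij => ?_, pow_lt_one₀ hπ01 hπ1 (by omega)⟩
  have hEne : E i ≠ E j := by
    rcases Nat.eq_or_lt_of_le h1i with hi1 | hi2 <;>
      rcases Nat.eq_or_lt_of_le h1j with hj1 | hj2
    · omega
    · simp only [hE, ← hi1, if_pos rfl, if_neg (by omega : j ≠ 1)]
      exact (hβltα 1 j le_rfl hg (by omega) hjg).ne'
    · simp only [hE, ← hj1, if_pos rfl, if_neg (by omega : i ≠ 1)]
      exact (hβltα 1 i le_rfl hg (by omega) hig).ne
    · simp only [hE, if_neg (by omega : i ≠ 1), if_neg (by omega : j ≠ 1)]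
      rcases lt_or_gt_of_ne hij with h | h
      · exact (hβstrict i j (by omega) h hjg).ne'
      · exact (hβstrict j i (by omega) h hig).ne
  have hminlt : min (E i) (E j) < α i := by
    rcases Nat.eq_or_lt_of_le h1i with hi1 | hi2 <;>
      rcases Nat.eq_or_lt_of_le h1j with hj1 | hj2
    · omega
    · have := hβltα 1 j le_rfl hg (by omega) hjg
      simp only [hE, ← hi1, if_pos rfl, if_neg (by omega : j ≠ 1)]
      omega
    · have := hβltα i i (by omega) hig (by omega) hig
      simp only [hE, ← hj1, if_pos rfl, if_neg (by omega : i ≠ 1)]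
      omega
    · have h1 := hβltα i i (by omega) hig (by omega) hig
      simp only [hE, if_neg (by omega : i ≠ 1), if_neg (by omega : j ≠ 1)]
      omega
  -- ‖c i - c j‖ = ‖π‖ ^ (e * m * min (E i) (E j))
  have hsub : ‖c i - c j‖ = ‖π‖ ^ (e * m * min (E i) (E j)) := by
    have hne : ‖c i‖ ≠ ‖-(c j)‖ := by
      rw [norm_neg, hnormc i h1i hig, hnormc j h1j hjg]
      intro h
      have hEm : e * m * E i ≠ e * m * E j := fun h' =>
        hEne (Nat.eq_of_mul_eq_mul_left hem h')
      rcases hEm.lt_or_gt with hlt | hlt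
      · exact absurd h (pow_lt_pow_right_of_lt_one₀ hπ0 hπ1 hlt).ne'
      · exact absurd h (pow_lt_pow_right_of_lt_one₀ hπ0 hπ1 hlt).ne
    rw [sub_eq_add_neg, IsUltrametricDist.norm_add_eq_max_of_norm_ne_norm hne,
      norm_neg, hnormc i h1i hig, hnormc j h1j hjg]
    rcases le_total (E i) (E j) with h | h
    · rw [min_eq_left h, max_eq_left
        (pow_le_pow_of_le_one hπ01 (le_of_lt hπ1) (Nat.mul_le_mul_left _ h))]
    · rw [min_eq_right h, max_eq_right
        (pow_le_pow_of_le_one hπ01 (le_of_lt hπ1) (Nat.mul_le_mul_left _ h))]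
  rw [hnormr i h1i hig, hsub, div_le_iff₀ (pow_pos hπ0 _), ← pow_add]
  refine pow_le_pow_of_le_one hπ01 (le_of_lt hπ1) ?_
  calc e * m + e * m * min (E i) (E j) = e * m * (min (E i) (E j) + 1) := by ring
  _ ≤ e * m * α i := Nat.mul_le_mul_left _ (by omega)
end
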